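/- Let e₀ be a segment with midpoint m₀ and lengthL = ||e₀||, and let c be a point equidistant from the endpoints of e₀ lying outside or on the boundary of the diametric (smallest enclosing) ball of e₀. Then dist(c, endpoint) ≥ L/√2. In particular, a Type II vertex insertion decreases the minimum edge length by at most a factor of 1/√2. -/
import Mathlib

/-- If `c` is equidistant from the endpoints of a segment `e₀` of length `L` and lies
outside (or on) the diametric ball of `e₀`, then `dist c xᵢ ≥ L/√2`; a Type II insertion
decreases the minimum edge length by at most a factor of `1/√2`. -/
theorem typeII_insertion_min_edge_factor
    (xi xj c : EuclideanSpace ℝ (Fin 3)) (L : ℝ)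
    (hL : L = dist xi xj)
    (heq : dist c xi = dist c xj)
    (hout : L / 2 ≤ dist c (midpoint ℝ xi xj)) :
    L / Real.sqrt 2 ≤ dist c xi := by
  have hd0 : (0:ℝ) ≤ dist c xi := dist_nonneg
  have hL0 : (0:ℝ) ≤ L := hL ▸ dist_nonneg
  -- rewrite distances as norms
  have h1 : dist c (midpoint ℝ xi xj) = ‖(c - xi) + (c - xj)‖ / 2 := by
    have hmid : c - midpoint ℝ xi xj = (2:ℝ)⁻¹ • ((c - xi) + (c - xj)) := by
      rw [midpoint_eq_smul_add, invOf_eq_inv]; module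
    rw [dist_eq_norm, hmid, norm_smul]
    simp [div_eq_inv_mul]
  have h2 : dist xi xj = ‖(c - xj) - (c - xi)‖ := by
    rw [dist_eq_norm]
    congr 1
    abel
  have h3 : dist c xi = ‖c - xi‖ := dist_eq_norm _ _
  have h4 : dist c xj = ‖c - xj‖ := dist_eq_norm _ _
  have hpar := norm_add_sq_real (c - xi) (c - xj)
  have hpar2 := norm_sub_sq_real (c - xj) (c - xi)
  have hip := real_inner_comm (c - xi) (c - xj)
  have hsq : L ^ 2 / 2 ≤ (dist c xi) ^ 2 := by
    rw [h3]
    have hm : ‖(c - xi) + (c - xj)‖ = 2 * dist c (midpoint ℝ xi xj) := by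
      rw [h1]; ring
    have heq' : ‖c - xi‖ = ‖c - xj‖ := by rw [← h3, ← h4, heq]
    have hL' : L = ‖c - xj - (c - xi)‖ := by rw [hL, h2]
    nlinarith [norm_nonneg ((c - xi) + (c - xj)), sq_nonneg (dist c (midpoint ℝ xi xj))]
  calc L / Real.sqrt 2 = Real.sqrt (L ^ 2 / 2) := by
        rw [Real.sqrt_div (sq_nonneg L), Real.sqrt_sq hL0,
          show ((2:ℝ)) = (2:ℝ) by norm_num]
    _ ≤ Real.sqrt ((dist c xi) ^ 2) := Real.sqrt_le_sqrt hsq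
    _ = dist c xi := Real.sqrt_sq hd0
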